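/- In the polynomial ring Q[x₁,...,x_r, y₁,...,y_s] with deg(x_i) = deg(y_i) = 2i, the homogeneous graded components (in each positive degree) of the element (1 + x₁ + ⋯ + x_r)(1 + y₁ + ⋯ + y_s) − 1 form a regular sequence. -/

import Mathlib

/-- Auxiliary predicate: each element of the list is a non-zero-divisor modulo `I`
together with the preceding elements. -/
def IsRegularSeqAux (R : Type u) [CommRing R] : Ideal R → List R → Prop
  | _, [] => True
  | I, a :: l => (∀ x : R, a * x ∈ I → x ∈ I) ∧ IsRegularSeqAux R (I ⊔ Ideal.span {a}) l

/-- A sequence `a₁, …, a_m` is regular if each `a_i` is a non-zero-divisor modulo the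
ideal generated by the preceding elements. -/
def IsRegularSequence (R : Type u) [CommRing R] (l : List R) : Prop :=
  IsRegularSeqAux R ⊥ l
open MvPolynomial

/-- `xe r s i` is the variable `x_i` (for `1 ≤ i ≤ r`), `1` for `i = 0`, and `0` otherwise. -/
noncomputable def xe (r s : ℕ) (i : ℕ) : MvPolynomial (Fin r ⊕ Fin s) ℚ :=
  if h0 : i = 0 then 1 else if h : i ≤ r then X (Sum.inl ⟨i - 1, by omega⟩) else 0

/-- `ye r s j` is the variable `y_j` (for `1 ≤ j ≤ s`), `1` for `j = 0`, and `0` otherwise. -/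
noncomputable def ye (r s : ℕ) (j : ℕ) : MvPolynomial (Fin r ⊕ Fin s) ℚ :=
  if h0 : j = 0 then 1 else if h : j ≤ s then X (Sum.inr ⟨j - 1, by omega⟩) else 0

/-- With the weighted grading `deg xᵢ = deg yᵢ = 2i`, `homComponent r s k` is the homogeneous
component of degree `2k` of `(1 + x₁ + ⋯ + x_r)(1 + y₁ + ⋯ + y_s) − 1`, namely
`Σ_{i+j=k} xᵢ yⱼ` (with `x₀ = y₀ = 1`). -/
noncomputable def homComponent (r s : ℕ) (k : ℕ) : MvPolynomial (Fin r ⊕ Fin s) ℚ :=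
  ∑ i ∈ Finset.range (k + 1), xe r s i * ye r s (k - i)

/-!
Write `F = X^r + x₁X^{r-1} + ⋯ + x_r` and `G = X^s + y₁X^{s-1} + ⋯ + y_s`. The component of degree
`2k` is the coefficient of `X^{r+s-k}` in `FG`, so the sequence consists of the non-leading
coefficients of `FG`; for `s = 0` it is `x₁, …, x_r`.

Induct on `s`. In `T = ℚ[x₁, …, x_r, y'₁, …, y'_s, u]` let `F'` and `G'` be the analogues of `F` and
`G`. The substitution `G ↦ G'·(X + u)` out of `ℚ[x₁, …, x_r, y₁, …, y_{s+1}]` and the substitution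
`F ↦ F'·(X + u)` out of `ℚ[x₁, …, x_{r+1}, y₁, …, y_s]` both send the sequence to the coefficients
of `F'G'(X + u)`, and each makes `T` free with a basis of powers of `u` starting at `1`. Regularity
goes up and down along such an extension, hence passes from `(r + 1, s)` to `(r, s + 1)`.

Freeness: `T` is generated over the image by `u`, and `-u` is a root of the monic image of `G`,
which gives spanning. For independence, sending the `y'_j` to the elementary symmetric polynomials
in `s` variables turns the image into the symmetric polynomials in `s + 1` variables; then a
relation has every variable as a root, and a Vandermonde determinant kills it.
-/

namespace RingHom

variable {A B : Type*} [CommRing A] [CommRing B] {ι : Type*} [Fintype ι]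

def HasBasis (φ : A →+* B) (b : ι → B) : Prop :=
  Function.Bijective fun c : ι → A => ∑ i, φ (c i) * b i

namespace HasBasis

variable {φ : A →+* B} {b : ι → B}

lemma mem_map_iff (h : φ.HasBasis b) {I : Ideal A} {z : B} :
    z ∈ I.map φ ↔ ∃ c : ι → A, (∀ i, c i ∈ I) ∧ ∑ i, φ (c i) * b i = z := by
  constructor
  · intro hz
    induction hz using Submodule.span_induction with
    | mem x hx =>
      obtain ⟨a, ha, rfl⟩ := hx
      obtain ⟨c, hc⟩ := h.2 1
      refine ⟨fun i => a * c i, fun i => I.mul_mem_right _ ha, ?_⟩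
      simp only [map_mul, mul_assoc, ← Finset.mul_sum, hc, mul_one]
    | zero => exact ⟨0, fun _ => I.zero_mem, by simp⟩
    | add x y _ _ hx hy =>
      obtain ⟨c, hc, rfl⟩ := hx
      obtain ⟨d, hd, rfl⟩ := hy
      exact ⟨c + d, fun i => I.add_mem (hc i) (hd i), by
        simp only [Pi.add_apply, map_add, add_mul, Finset.sum_add_distrib]⟩
    | smul s x _ hx =>
      obtain ⟨c, hc, rfl⟩ := hx
      choose d hd using fun i => h.2 (s * b i)
      refine ⟨fun j => ∑ i, c i * d i j, fun j => I.sum_mem fun i _ => I.mul_mem_right _ (hc i),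
        ?_⟩
      simp only [smul_eq_mul, Finset.mul_sum, map_sum, map_mul, Finset.sum_mul]
      rw [Finset.sum_comm]
      refine Finset.sum_congr rfl fun i _ => ?_
      rw [mul_left_comm, ← hd i, Finset.mul_sum]
      simp only [mul_assoc]
  · rintro ⟨c, hc, rfl⟩
    exact sum_mem fun i _ => Ideal.mul_mem_right _ _ (Ideal.mem_map_of_mem φ (hc i))

lemma isRegularSeqAux_map_iff (h : φ.HasBasis b) {i₀ : ι} (hb : b i₀ = 1) :
    ∀ (l : List A) (I : Ideal A),
      IsRegularSeqAux A I l ↔ IsRegularSeqAux B (I.map φ) (l.map φ)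
  | [], _ => Iff.rfl
  | a :: l, I => by
    classical
    have hsup : I.map φ ⊔ Ideal.span {φ a} = (I ⊔ Ideal.span {a}).map φ := by
      rw [Ideal.map_sup, Ideal.map_span, Set.image_singleton]
    have hmul (c : ι → A) : φ a * ∑ i, φ (c i) * b i = ∑ i, φ (a * c i) * b i := by
      simp only [Finset.mul_sum, map_mul, mul_assoc]
    simp only [IsRegularSeqAux, List.map_cons, hsup, ← isRegularSeqAux_map_iff h hb l]
    refine and_congr_left' ⟨fun hreg z hz => ?_, fun hreg x hx => ?_⟩
    · obtain ⟨c, rfl⟩ := h.2 z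
      rw [hmul, h.mem_map_iff] at hz
      obtain ⟨d, hd, hdc⟩ := hz
      rw [h.1 hdc] at hd
      exact h.mem_map_iff.2 ⟨c, fun i => hreg _ (hd i), rfl⟩
    · have hx' : φ x = ∑ i, φ ((Pi.single i₀ x : ι → A) i) * b i := by
        rw [Finset.sum_eq_single i₀ (fun i _ hi => by simp [hi]) (by simp)]
        simp [hb]
      obtain ⟨c, hc, hcx⟩ := h.mem_map_iff.1 <|
        hreg _ (by rw [← map_mul]; exact Ideal.mem_map_of_mem φ hx)
      rw [hx', h.1.eq_iff] at hcx
      simpa [hcx] using hc i₀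

lemma comp_ringEquiv (h : φ.HasBasis b) {A' B' : Type*} [CommRing A'] [CommRing B']
    (e : A' ≃+* A) (e' : B ≃+* B') :
    ((e' : B →+* B').comp (φ.comp (e : A' →+* A))).HasBasis (e' ∘ b) := by
  have : (fun c : ι → A' => ∑ i, (e' : B →+* B').comp (φ.comp (e : A' →+* A)) (c i) * (e' ∘ b) i) =
      e' ∘ (fun c : ι → A => ∑ i, φ (c i) * b i) ∘ (fun c => e ∘ c) := by
    ext c; simp
  rw [HasBasis, this]
  exact e'.bijective.comp (h.comp (e.bijective.comp_left))

end HasBasis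

end RingHom

namespace Polynomial

variable {S : Type*} [Semiring S] {m : ℕ}

noncomputable def monicOfCoeffs (v : Fin m → S) : S[X] :=
  X ^ m + ∑ i : Fin m, C (v i.rev) * X ^ (i : ℕ)

lemma monic_monicOfCoeffs (v : Fin m → S) : (monicOfCoeffs v).Monic :=
  monic_X_pow_add (degree_sum_fin_lt _)

lemma natDegree_monicOfCoeffs [Nontrivial S] (v : Fin m → S) :
    (monicOfCoeffs v).natDegree = m := by
  rw [monicOfCoeffs, natDegree_add_eq_left_of_degree_lt (by simpa using degree_sum_fin_lt _),
    natDegree_X_pow]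

lemma coeff_monicOfCoeffs (v : Fin m → S) (i : Fin m) :
    (monicOfCoeffs v).coeff i = v i.rev := by
  simp [monicOfCoeffs, coeff_X_pow, finsetSum_coeff, i.isLt.ne, Fin.val_inj]

lemma coeff_monicOfCoeffs_self (v : Fin m → S) : (monicOfCoeffs v).coeff m = 1 := by
  simp [monicOfCoeffs, finsetSum_coeff, ne_of_gt]

lemma coeff_monicOfCoeffs_of_lt (v : Fin m → S) {d : ℕ} (h : m < d) :
    (monicOfCoeffs v).coeff d = 0 := by
  simp [monicOfCoeffs, finsetSum_coeff, coeff_X_pow, h.ne',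
    fun i : Fin m => (i.isLt.trans h).ne']

lemma map_monicOfCoeffs {S' : Type*} [Semiring S'] (f : S →+* S') (v : Fin m → S) :
    (monicOfCoeffs v).map f = monicOfCoeffs (f ∘ v) := by
  simp [monicOfCoeffs, Polynomial.map_sum]

lemma eq_monicOfCoeffs {P : S[X]} (hP : P.Monic) (hd : P.natDegree = m) :
    P = monicOfCoeffs fun i : Fin m => P.coeff i.rev := by
  ext d
  rcases lt_trichotomy d m with h | rfl | h
  · simpa using (coeff_monicOfCoeffs (fun i : Fin m => P.coeff i.rev) ⟨d, h⟩).symm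
  · rw [coeff_monicOfCoeffs_self, ← hd, hP.coeff_natDegree]
  · rw [coeff_eq_zero_of_natDegree_lt (hd ▸ h), coeff_monicOfCoeffs_of_lt _ h]

lemma coeff_reflect_monicOfCoeffs (v : Fin m → S) (i : ℕ) : ((monicOfCoeffs v).reflect m).coeff i =
      if h0 : i = 0 then 1 else if h : i ≤ m then v ⟨i - 1, by omega⟩ else 0 := by
  rw [coeff_reflect]
  split_ifs with h0 h
  · simp [h0, coeff_monicOfCoeffs_self]
  · rw [revAt_le h]
    simpa [Fin.rev, show m - (m - i + 1) = i - 1 by omega] using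
      coeff_monicOfCoeffs v ⟨m - i, by omega⟩
  · rw [revAt_eq_self_of_lt (by omega),
      coeff_monicOfCoeffs_of_lt _ (by omega)]

noncomputable def lowerCoeffs (N : ℕ) (P : S[X]) : List S :=
  List.ofFn fun k : Fin N => P.coeff k.rev

lemma map_lowerCoeffs {S' : Type*} [Semiring S'] (f : S →+* S') (N : ℕ) (P : S[X]) :
    (lowerCoeffs N P).map f = lowerCoeffs N (P.map f) := by
  simp [lowerCoeffs, List.map_ofFn, Function.comp_def]

end Polynomial

lemma Matrix.eq_zero_of_forall_sum_mul_pow_eq_zero {D : Type*} [CommRing D] [IsDomain D] {n : ℕ}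
    {x : Fin n → D} (hx : Function.Injective x) {c : Fin n → D}
    (h : ∀ p, ∑ k, c k * x p ^ (k : ℕ) = 0) : c = 0 := by
  refine Matrix.eq_zero_of_mulVec_eq_zero (Matrix.det_vandermonde_ne_zero_iff.2 hx) ?_
  ext p
  simpa [Matrix.mulVec, dotProduct, Matrix.vandermonde_apply, mul_comm] using h p

open Polynomial (monicOfCoeffs lowerCoeffs)

namespace MvPolynomial

variable {A : Type*} [CommRing A]

lemma prod_X_add_C_X_eq_monicOfCoeffs [Nontrivial A] (m : ℕ) :
    ∏ i : Fin m, (Polynomial.X + Polynomial.C (X i : MvPolynomial (Fin m) A)) =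
      monicOfCoeffs fun j : Fin m => esymm (Fin m) A (j + 1) := by
  have hmonic (i : Fin m) :
      (Polynomial.X + Polynomial.C (X i : MvPolynomial (Fin m) A)).Monic :=
    Polynomial.monic_X_add_C _
  rw [Polynomial.eq_monicOfCoeffs (m := m) (Polynomial.monic_prod_of_monic _ _ fun i _ => hmonic i)
    (by simp [Polynomial.natDegree_prod_of_monic _ _ fun i _ => hmonic i])]
  congr 1
  funext j
  rw [prod_X_add_C_coeff A (Fin m) _ (by simp)]
  congr 1
  simp; omega

lemma algHom_ext_of_map_monicOfCoeffs {m : ℕ} {B : Type*} [CommRing B] [Algebra A B]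
    {f g : MvPolynomial (Fin m) A →ₐ[A] B}
    (h : (monicOfCoeffs X).map (f : MvPolynomial (Fin m) A →+* B) =
      (monicOfCoeffs X).map (g : MvPolynomial (Fin m) A →+* B)) :
    f = g := by
  refine algHom_ext fun j => ?_
  have := congrArg (Polynomial.coeff · j.rev) h
  simpa only [Polynomial.coeff_map, Polynomial.coeff_monicOfCoeffs, Fin.rev_rev,
    RingHom.coe_coe] using this

lemma isRegularSeqAux_map_X {σ R : Type*} [CommRing R] :
    ∀ (l : List σ), l.Nodup → ∀ T : Set σ, (∀ i ∈ l, i ∉ T) →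
      IsRegularSeqAux (MvPolynomial σ R) (Ideal.span (X '' T)) (l.map X)
  | [], _, _, _ => trivial
  | a :: l, hl, T, hT => by
    have haT : a ∉ T := hT a List.mem_cons_self
    refine ⟨fun f hf => ?_, ?_⟩
    · rw [mem_ideal_span_X_image] at hf ⊢
      intro m hm
      have hm' : m + Finsupp.single a 1 ∈ (X a * f).support := by
        classical
        rw [mul_comm, support_mul_X]
        exact Finset.mem_map_of_mem _ hm
      obtain ⟨i, hiT, hi⟩ := hf _ hm'
      have hai : a ≠ i := fun h => haT (h ▸ hiT)
      exact ⟨i, hiT, by simpa [Finsupp.single_apply, hai] using hi⟩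
    · rw [sup_comm, ← Ideal.span_insert, ← Set.image_insert_eq]
      have hl' := List.nodup_cons.1 hl
      refine isRegularSeqAux_map_X l hl'.2 _ fun i hi hiT => ?_
      rcases Set.mem_insert_iff.1 hiT with rfl | hiT
      · exact hl'.1 hi
      · exact hT i (List.mem_cons_of_mem a hi) hiT

variable (A) (n : ℕ)

noncomputable def splitLastPoly : Polynomial (MvPolynomial (Fin (n + 1)) A) :=
  monicOfCoeffs (fun i : Fin n => (X i.castSucc : MvPolynomial (Fin (n + 1)) A)) *
    (Polynomial.X + Polynomial.C (X (Fin.last n)))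

lemma monic_splitLastPoly : (splitLastPoly A n).Monic :=
  (Polynomial.monic_monicOfCoeffs _).mul (Polynomial.monic_X_add_C _)

noncomputable def splitLast : MvPolynomial (Fin (n + 1)) A →ₐ[A] MvPolynomial (Fin (n + 1)) A :=
  aeval fun j => (splitLastPoly A n).coeff j.rev

lemma map_splitLast_monicOfCoeffs [Nontrivial A] :
    (monicOfCoeffs X).map (splitLast A n).toRingHom = splitLastPoly A n := by
  have hdeg : (splitLastPoly A n).natDegree = n + 1 := by
    rw [splitLastPoly, (Polynomial.monic_monicOfCoeffs _).natDegree_mul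
      (Polynomial.monic_X_add_C _), Polynomial.natDegree_monicOfCoeffs,
      Polynomial.natDegree_X_add_C]
  rw [Polynomial.map_monicOfCoeffs, Polynomial.eq_monicOfCoeffs (monic_splitLastPoly A n) hdeg]
  congr 1
  funext j
  simp [splitLast]

lemma eval₂_splitLast_monicOfCoeffs [Nontrivial A] :
    (monicOfCoeffs X).eval₂ (splitLast A n).toRingHom (-X (Fin.last n)) = 0 := by
  rw [Polynomial.eval₂_eq_eval_map, map_splitLast_monicOfCoeffs]
  simp [splitLastPoly]

lemma eval₂RingHom_splitLast_surjective [Nontrivial A] :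
    Function.Surjective (Polynomial.eval₂RingHom (splitLast A n).toRingHom (-X (Fin.last n))) := by
  set ev := Polynomial.eval₂RingHom (splitLast A n).toRingHom (-X (Fin.last n))
  -- the `X i.castSucc` are the coefficients of `G /ₘ (X + u)`, a division done with `-u` generic
  have hcoeff (i : ℕ) :
      (monicOfCoeffs fun i : Fin n => (X i.castSucc : MvPolynomial (Fin (n + 1)) A)).coeff i ∈
        ev.range := by
    let D : Polynomial (Polynomial (MvPolynomial (Fin (n + 1)) A)) :=
      Polynomial.X + Polynomial.C (-Polynomial.X)
    have hD : D.Monic := Polynomial.monic_X_add_C _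
    have hev_C : ev.comp Polynomial.C = (splitLast A n).toRingHom :=
      RingHom.ext fun _ => Polynomial.eval₂_C _ _
    have hdiv : ((monicOfCoeffs X).map Polynomial.C /ₘ D).map ev =
        monicOfCoeffs fun i : Fin n => (X i.castSucc : MvPolynomial (Fin (n + 1)) A) := by
      rw [Polynomial.map_divByMonic ev hD, Polynomial.map_map, hev_C,
        map_splitLast_monicOfCoeffs, splitLastPoly, mul_comm]
      convert Polynomial.mul_divByMonic_cancel_left _ (Polynomial.monic_X_add_C _)
      simp [D, ev]
    rw [← hdiv, Polynomial.coeff_map]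
    exact ⟨_, rfl⟩
  suffices ∀ z, z ∈ ev.range from this
  intro z
  induction z using MvPolynomial.induction_on with
  | C a => exact ⟨Polynomial.C (C a), (Polynomial.eval₂_C _ _).trans ((splitLast A n).commutes a)⟩
  | add p q hp hq => exact add_mem hp hq
  | mul_X p i hp =>
    refine mul_mem hp (Fin.lastCases ⟨-Polynomial.X, by simp [ev]⟩ (fun j => ?_) i)
    simpa only [Polynomial.coeff_monicOfCoeffs, Fin.rev_rev] using hcoeff j.rev

lemma exists_sum_splitLast_mul_pow [Nontrivial A] (z : MvPolynomial (Fin (n + 1)) A) :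
    ∃ c : Fin (n + 1) → MvPolynomial (Fin (n + 1)) A,
      ∑ k, splitLast A n (c k) * (-X (Fin.last n)) ^ (k : ℕ) = z := by
  obtain ⟨F, rfl⟩ := eval₂RingHom_splitLast_surjective A n z
  have hG := Polynomial.monic_monicOfCoeffs (X : Fin (n + 1) → MvPolynomial (Fin (n + 1)) A)
  have hGdeg := Polynomial.natDegree_monicOfCoeffs (X : Fin (n + 1) → MvPolynomial (Fin (n + 1)) A)
  have hdeg : (F %ₘ monicOfCoeffs X).natDegree < n + 1 :=
    (Polynomial.natDegree_modByMonic_lt F hG fun h => by simp [h] at hGdeg).trans_eq hGdeg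
  have hF : Polynomial.eval₂RingHom (splitLast A n).toRingHom (-X (Fin.last n)) F =
      (F %ₘ monicOfCoeffs X).eval₂ (splitLast A n).toRingHom (-X (Fin.last n)) := by
    conv_lhs => rw [← Polynomial.modByMonic_add_div F (monicOfCoeffs X)]
    rw [map_add, map_mul, Polynomial.coe_eval₂RingHom, eval₂_splitLast_monicOfCoeffs, zero_mul,
      add_zero]
  refine ⟨fun k => (F %ₘ monicOfCoeffs X).coeff k, ?_⟩
  rw [hF, Polynomial.eval₂_eq_sum_range' _ hdeg]
  exact Fin.sum_univ_eq_sum_range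
    (fun k => splitLast A n ((F %ₘ monicOfCoeffs X).coeff k) * (-X (Fin.last n)) ^ k) (n + 1)

lemma exists_comp_splitLast_eq_esymmAlgHom [Nontrivial A] :
    ∃ β : MvPolynomial (Fin (n + 1)) A →ₐ[A] MvPolynomial (Fin (n + 1)) A,
      β (X (Fin.last n)) = X (Fin.last n) ∧
      β.comp (splitLast A n) =
        (symmetricSubalgebra (Fin (n + 1)) A).val.comp (esymmAlgHom (Fin (n + 1)) A (n + 1)) := by
  let β : MvPolynomial (Fin (n + 1)) A →ₐ[A] MvPolynomial (Fin (n + 1)) A :=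
    aeval (Fin.lastCases (X (Fin.last n)) fun j => rename Fin.castSucc (esymm (Fin n) A (j + 1)))
  have hβu : β (X (Fin.last n)) = X (Fin.last n) := by simp [β]
  refine ⟨β, hβu, algHom_ext_of_map_monicOfCoeffs ?_⟩
  have hprod :
      ∏ i : Fin (n + 1), (Polynomial.X + Polynomial.C (X i : MvPolynomial (Fin (n + 1)) A)) =
        (∏ i : Fin n, (Polynomial.X + Polynomial.C (X i : MvPolynomial (Fin n) A))).map
          (rename Fin.castSucc : MvPolynomial (Fin n) A →ₐ[A] MvPolynomial (Fin (n + 1)) A) *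
        (Polynomial.X + Polynomial.C (X (Fin.last n))) := by
    simp [Fin.prod_univ_castSucc, Polynomial.map_prod]
  calc (monicOfCoeffs X).map
        ((β.comp (splitLast A n) : MvPolynomial (Fin (n + 1)) A →ₐ[A] _) :
          MvPolynomial (Fin (n + 1)) A →+* _)
      = (splitLastPoly A n).map
          (β : MvPolynomial (Fin (n + 1)) A →+* MvPolynomial (Fin (n + 1)) A) := by
        rw [← map_splitLast_monicOfCoeffs, Polynomial.map_map]; rfl
    _ = ∏ i : Fin (n + 1),
          (Polynomial.X + Polynomial.C (X i : MvPolynomial (Fin (n + 1)) A)) := by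
        rw [hprod, prod_X_add_C_X_eq_monicOfCoeffs]
        simp [splitLastPoly, Polynomial.map_monicOfCoeffs, β, Function.comp_def]
    _ = _ := by
        rw [Polynomial.map_monicOfCoeffs, prod_X_add_C_X_eq_monicOfCoeffs]
        congr 1
        funext j
        simp [esymmAlgHom]

lemma eq_zero_of_sum_splitLast_mul_pow_eq_zero [IsDomain A]
    {c : Fin (n + 1) → MvPolynomial (Fin (n + 1)) A}
    (h : ∑ k, splitLast A n (c k) * (-X (Fin.last n)) ^ (k : ℕ) = 0) : c = 0 := by
  obtain ⟨β, hβu, hβ⟩ := exists_comp_splitLast_eq_esymmAlgHom A n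
  let ψ (k : Fin (n + 1)) : MvPolynomial (Fin (n + 1)) A :=
    esymmAlgHom (Fin (n + 1)) A (n + 1) (c k)
  have hroot (p : Fin (n + 1)) : ∑ k, ψ k * (-X p) ^ (k : ℕ) = 0 := by
    have hψ (k) : β (splitLast A n (c k)) = ψ k := AlgHom.congr_fun hβ (c k)
    have hsymm (k) : rename (Equiv.swap p (Fin.last n)) (ψ k) = ψ k :=
      (esymmAlgHom (Fin (n + 1)) A (n + 1) (c k)).2 _
    simpa [hψ, hsymm, hβu] using congrArg (rename (Equiv.swap p (Fin.last n))) (congrArg β h)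
  have hψ0 : ψ = 0 := Matrix.eq_zero_of_forall_sum_mul_pow_eq_zero
    (fun p q hpq => X_injective (neg_injective hpq)) hroot
  funext k
  refine esymmAlgHom_injective (σ := Fin (n + 1)) A (by simp) (Subtype.ext ?_)
  simpa [ψ] using congrFun hψ0 k

theorem hasBasis_splitLast [IsDomain A] :
    (splitLast A n).toRingHom.HasBasis
      fun k : Fin (n + 1) => (-X (Fin.last n)) ^ (k : ℕ) := by
  refine ⟨fun c d hcd => sub_eq_zero.1 (eq_zero_of_sum_splitLast_mul_pow_eq_zero A n ?_),
    exists_sum_splitLast_mul_pow A n⟩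
  simpa [sub_mul, Finset.sum_sub_distrib, sub_eq_zero] using hcd

end MvPolynomial

section HomComponents

variable (r s : ℕ)

noncomputable def xPoly : Polynomial (MvPolynomial (Fin r ⊕ Fin s) ℚ) :=
  monicOfCoeffs fun i => X (Sum.inl i)

noncomputable def yPoly : Polynomial (MvPolynomial (Fin r ⊕ Fin s) ℚ) :=
  monicOfCoeffs fun j => X (Sum.inr j)

lemma homComponent_eq_coeff {k : ℕ} (hk : k ≤ r + s) :
    homComponent r s k = (xPoly r s * yPoly r s).coeff (r + s - k) := by
  have hx : ∀ i, xe r s i = ((xPoly r s).reflect r).coeff i := fun i => by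
    rw [xPoly, Polynomial.coeff_reflect_monicOfCoeffs]; rfl
  have hy : ∀ j, ye r s j = ((yPoly r s).reflect s).coeff j := fun j => by
    rw [yPoly, Polynomial.coeff_reflect_monicOfCoeffs]; rfl
  have hdx : (xPoly r s).natDegree ≤ r := (Polynomial.natDegree_monicOfCoeffs _).le
  have hdy : (yPoly r s).natDegree ≤ s := (Polynomial.natDegree_monicOfCoeffs _).le
  rw [← Polynomial.revAt_le hk, ← Polynomial.coeff_reflect, Polynomial.reflect_mul _ _ hdx hdy,
    Polynomial.coeff_mul, Finset.Nat.sum_antidiagonal_eq_sum_range_succ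
      (fun i j => ((xPoly r s).reflect r).coeff i * ((yPoly r s).reflect s).coeff j)]
  simp [homComponent, hx, hy]

lemma ofFn_homComponent_eq_lowerCoeffs :
    List.ofFn (fun k : Fin (r + s) => homComponent r s (k + 1)) =
      lowerCoeffs (r + s) (xPoly r s * yPoly r s) := by
  simp only [lowerCoeffs, Fin.val_rev]
  congr 1
  funext k
  exact homComponent_eq_coeff r s (by omega)

noncomputable def yBlockEquiv :
    MvPolynomial (Fin r ⊕ Fin (s + 1)) ℚ ≃+* MvPolynomial (Fin (s + 1)) (MvPolynomial (Fin r) ℚ) :=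
  (renameEquiv ℚ (Equiv.sumComm (Fin r) (Fin (s + 1)))).toRingEquiv.trans
    (sumRingEquiv ℚ (Fin (s + 1)) (Fin r))

-- `x_{r+1}` becomes `y_{s+1}`; the other variables keep their names.
def moveLast : Fin (r + 1) ⊕ Fin s ≃ Fin r ⊕ Fin (s + 1) :=
  (finSumFinEquiv.symm.sumCongr (Equiv.refl _)).trans <| (Equiv.sumAssoc _ _ _).trans <|
    (Equiv.refl _).sumCongr ((Equiv.sumComm _ _).trans finSumFinEquiv)

noncomputable def xBlockEquiv :
    MvPolynomial (Fin (r + 1)) (MvPolynomial (Fin s) ℚ) ≃+* MvPolynomial (Fin r ⊕ Fin (s + 1)) ℚ :=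
  (sumRingEquiv ℚ (Fin (r + 1)) (Fin s)).symm.trans (renameEquiv ℚ (moveLast r s)).toRingEquiv

noncomputable def splitY :
    MvPolynomial (Fin r ⊕ Fin (s + 1)) ℚ →+* MvPolynomial (Fin r ⊕ Fin (s + 1)) ℚ :=
  (yBlockEquiv r s).symm.toRingHom.comp
    ((splitLast (MvPolynomial (Fin r) ℚ) s).toRingHom.comp (yBlockEquiv r s).toRingHom)

noncomputable def splitX :
    MvPolynomial (Fin (r + 1) ⊕ Fin s) ℚ →+* MvPolynomial (Fin r ⊕ Fin (s + 1)) ℚ :=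
  (xBlockEquiv r s).toRingHom.comp
    ((splitLast (MvPolynomial (Fin s) ℚ) r).toRingHom.comp
      (sumRingEquiv ℚ (Fin (r + 1)) (Fin s)).toRingHom)

lemma map_splitY_xPoly : (xPoly r (s + 1)).map (splitY r s) = xPoly r (s + 1) := by
  simp [xPoly, splitY, yBlockEquiv, Polynomial.map_monicOfCoeffs, Function.comp_def]

lemma map_splitY_yPoly : (yPoly r (s + 1)).map (splitY r s) =
    monicOfCoeffs
      (fun j : Fin s => (X (Sum.inr j.castSucc) : MvPolynomial (Fin r ⊕ Fin (s + 1)) ℚ)) *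
      (Polynomial.X + Polynomial.C (X (Sum.inr (Fin.last s)))) := by
  have h : (yPoly r (s + 1)).map (yBlockEquiv r s).toRingHom = monicOfCoeffs X := by
    simp [yPoly, yBlockEquiv, Polynomial.map_monicOfCoeffs, Function.comp_def]
  rw [splitY, ← Polynomial.map_map, ← Polynomial.map_map, h, map_splitLast_monicOfCoeffs]
  simp [splitLastPoly, yBlockEquiv, Polynomial.map_monicOfCoeffs, Function.comp_def]

lemma map_splitX_xPoly : (xPoly (r + 1) s).map (splitX r s) =
    xPoly r (s + 1) * (Polynomial.X + Polynomial.C (X (Sum.inr (Fin.last s)))) := by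
  have h : (xPoly (r + 1) s).map (sumRingEquiv ℚ (Fin (r + 1)) (Fin s)).toRingHom =
      monicOfCoeffs X := by
    simp [xPoly, Polynomial.map_monicOfCoeffs, Function.comp_def]
  rw [splitX, ← Polynomial.map_map, ← Polynomial.map_map, h, map_splitLast_monicOfCoeffs]
  simp [splitLastPoly, xBlockEquiv, xPoly, moveLast, Polynomial.map_monicOfCoeffs,
    Function.comp_def]
  exact Or.inl rfl

lemma map_splitX_yPoly : (yPoly (r + 1) s).map (splitX r s) =
    monicOfCoeffs
      (fun j : Fin s => (X (Sum.inr j.castSucc) : MvPolynomial (Fin r ⊕ Fin (s + 1)) ℚ)) := by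
  simp [yPoly, splitX, xBlockEquiv, moveLast, Polynomial.map_monicOfCoeffs, Function.comp_def]
  rfl

lemma isRegularSeqAux_xPoly_mul_yPoly_succ
    (h : IsRegularSeqAux (MvPolynomial (Fin (r + 1) ⊕ Fin s) ℚ) ⊥
      (lowerCoeffs (r + 1 + s) (xPoly (r + 1) s * yPoly (r + 1) s))) :
    IsRegularSeqAux (MvPolynomial (Fin r ⊕ Fin (s + 1)) ℚ) ⊥
      (lowerCoeffs (r + (s + 1)) (xPoly r (s + 1) * yPoly r (s + 1))) := by
  have hX := (hasBasis_splitLast (MvPolynomial (Fin s) ℚ) r).comp_ringEquiv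
    (sumRingEquiv ℚ (Fin (r + 1)) (Fin s)) (xBlockEquiv r s)
  have hY := (hasBasis_splitLast (MvPolynomial (Fin r) ℚ) s).comp_ringEquiv
    (yBlockEquiv r s) (yBlockEquiv r s).symm
  have hglue : (xPoly (r + 1) s * yPoly (r + 1) s).map (splitX r s) =
      (xPoly r (s + 1) * yPoly r (s + 1)).map (splitY r s) := by
    rw [Polynomial.map_mul, Polynomial.map_mul, map_splitX_xPoly, map_splitX_yPoly,
      map_splitY_xPoly, map_splitY_yPoly]
    ring
  rw [hY.isRegularSeqAux_map_iff (i₀ := 0) (by simp), Ideal.map_bot, Polynomial.map_lowerCoeffs]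
  change IsRegularSeqAux _ ⊥ (lowerCoeffs _ ((xPoly r (s + 1) * yPoly r (s + 1)).map (splitY r s)))
  rw [← hglue, show r + (s + 1) = r + 1 + s by omega, ← Polynomial.map_lowerCoeffs,
    ← Ideal.map_bot (f := splitX r s)]
  exact (hX.isRegularSeqAux_map_iff (i₀ := 0) (by simp) _ _).1 h

end HomComponents

lemma isRegularSeqAux_xPoly_mul_yPoly_zero (r : ℕ) :
    IsRegularSeqAux (MvPolynomial (Fin r ⊕ Fin 0) ℚ) ⊥
      (lowerCoeffs (r + 0) (xPoly r 0 * yPoly r 0)) := by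
  have hy : yPoly r 0 = 1 := by simp [yPoly, monicOfCoeffs]
  have hl : lowerCoeffs (r + 0) (xPoly r 0) = (List.ofFn Sum.inl).map X := by
    simp only [lowerCoeffs, xPoly, Polynomial.coeff_monicOfCoeffs, Fin.rev_rev, List.map_ofFn]
    rfl
  rw [hy, mul_one, hl, ← Ideal.span_empty, ← Set.image_empty X]
  exact isRegularSeqAux_map_X _ (List.nodup_ofFn.2 Sum.inl_injective) _ fun _ _ => id

lemma isRegularSeqAux_xPoly_mul_yPoly : ∀ s r : ℕ,
    IsRegularSeqAux (MvPolynomial (Fin r ⊕ Fin s) ℚ) ⊥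
      (lowerCoeffs (r + s) (xPoly r s * yPoly r s))
  | 0, r => isRegularSeqAux_xPoly_mul_yPoly_zero r
  | s + 1, r => isRegularSeqAux_xPoly_mul_yPoly_succ r s (isRegularSeqAux_xPoly_mul_yPoly s (r + 1))

/-- In `ℚ[x₁,…,x_r,y₁,…,y_s]` with `deg xᵢ = deg yᵢ = 2i`, the homogeneous
components (in each positive degree `2k`, `k = 1, …, r+s`) of
`(1 + x₁ + ⋯ + x_r)(1 + y₁ + ⋯ + y_s) − 1` form a regular sequence. -/
theorem homComponents_regular (r s : ℕ) :
    IsRegularSequence (MvPolynomial (Fin r ⊕ Fin s) ℚ)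
      (List.ofFn fun k : Fin (r + s) => homComponent r s ((k : ℕ) + 1)) := by
  rw [IsRegularSequence, ofFn_homComponent_eq_lowerCoeffs]
  exact isRegularSeqAux_xPoly_mul_yPoly s r
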